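/- arXiv:2202.06810 — 2 statements merged into one kernel-verified Lean document; each statement's English description precedes it below -/
import Mathlib

section
/- For every even n ≥ 2, the maximum cardinality of a family 𝓜 of simple graphs on the vertex set Fin n such that for no two distinct members G, G' ∈ 𝓜 does the symmetric difference G ⊕ G' contain a spanning star equals 2^(n(n−2)/2) (that is, 2 raised to the power C(n,2) − n/2). -/
open SimpleGraph Filter

/-- The symmetric difference of two simple graphs on the same vertex set:
two vertices are adjacent iff they are adjacent in exactly one of the graphs. -/
def symmDiffG {V : Type*} (G G' : SimpleGraph V) : SimpleGraph V where
  Adj u v := (G.Adj u v ∧ ¬ G'.Adj u v) ∨ (G'.Adj u v ∧ ¬ G.Adj u v)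
  symm := by
    constructor
    intro u v h
    rcases h with ⟨h1, h2⟩ | ⟨h1, h2⟩
    · exact Or.inl ⟨h1.symm, fun h => h2 h.symm⟩
    · exact Or.inr ⟨h1.symm, fun h => h2 h.symm⟩
  loopless := by
    constructor
    intro u h
    rcases h with ⟨h1, _⟩ | ⟨h1, _⟩
    · exact G.ne_of_adj h1 rfl
    · exact G'.ne_of_adj h1 rfl


/-- A graph contains a spanning star if some vertex is adjacent to all other vertices. -/
def HasSpanningStar {V : Type*} (G : SimpleGraph V) : Prop :=
  ∃ v : V, ∀ w : V, w ≠ v → G.Adj v w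

/-! ### Auxiliary machinery for the upper bound -/

/-- The row of a vertex: the set of neighbours of `v` in `G`. -/
noncomputable def gRow {k : ℕ} (G : SimpleGraph (Fin k)) (v : Fin k) : Finset (Fin k) :=
  @Finset.filter _ (fun w => G.Adj v w) (fun _ => Classical.propDecidable _) Finset.univ

lemma mem_gRow {k : ℕ} {G : SimpleGraph (Fin k)} {v w : Fin k} :
    w ∈ gRow G v ↔ G.Adj v w := by simp [gRow]

/-- Restriction of a graph on `Fin (k+1)` to the first `k` vertices. -/
noncomputable def gRes {k : ℕ} (G : SimpleGraph (Fin (k+1))) : SimpleGraph (Fin k) :=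
  G.comap Fin.castSucc

lemma gRes_adj {k : ℕ} {G : SimpleGraph (Fin (k+1))} {i j : Fin k} :
    (gRes G).Adj i j ↔ G.Adj i.castSucc j.castSucc := Iff.rfl

lemma res_inj {k : ℕ} {G G' : SimpleGraph (Fin (k+1))}
    (hrow : gRow G (Fin.last k) = gRow G' (Fin.last k)) (hres : gRes G = gRes G') :
    G = G' := by
  have hrow' : ∀ w, G.Adj (Fin.last k) w ↔ G'.Adj (Fin.last k) w := by
    intro w; rw [← mem_gRow, ← mem_gRow, hrow]
  have hres' : ∀ i j : Fin k, G.Adj i.castSucc j.castSucc ↔ G'.Adj i.castSucc j.castSucc := by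
    intro i j; rw [← gRes_adj, ← gRes_adj, hres]
  ext i j
  induction i using Fin.lastCases with
  | last => exact hrow' j
  | cast i =>
    induction j using Fin.lastCases with
    | last =>
      rw [SimpleGraph.adj_comm, SimpleGraph.adj_comm G']
      exact hrow' i.castSucc
    | cast j => exact hres' i j

/-- extension of a subset of `Fin k` to `Fin (k+1)`, adding `last` iff `b`. -/
def extend {k : ℕ} (b : Bool) (T : Finset (Fin k)) : Finset (Fin (k+1)) :=
  T.map ⟨Fin.castSucc, Fin.castSucc_injective k⟩ ∪ (if b then {Fin.last k} else ∅)

lemma mem_extend_cast {k : ℕ} {b : Bool} {T : Finset (Fin k)} {x : Fin k} :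
    x.castSucc ∈ extend b T ↔ x ∈ T := by
  simp only [extend, Finset.mem_union, Finset.mem_map, Function.Embedding.coeFn_mk]
  constructor
  · rintro (⟨y, hy, hxy⟩ | h)
    · rwa [← Fin.castSucc_injective k hxy]
    · exfalso
      rcases b with _ | _ <;> simp at h
  · intro h; exact Or.inl ⟨x, h, rfl⟩

lemma mem_extend_last {k : ℕ} {b : Bool} {T : Finset (Fin k)} :
    Fin.last k ∈ extend b T ↔ b = true := by
  simp only [extend, Finset.mem_union, Finset.mem_map, Function.Embedding.coeFn_mk]
  constructor
  · rintro (⟨y, _, hxy⟩ | h)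
    · exact absurd hxy (Fin.ne_of_lt (Fin.castSucc_lt_last y))
    · rcases b with _ | _ <;> simp_all
  · intro h; subst h; simp

lemma extend_injective {k : ℕ} (b : Bool) : Function.Injective (extend (k := k) b) := by
  intro T T' h
  ext x
  rw [← mem_extend_cast (b := b) (T := T), h, mem_extend_cast]

/-- The key counting inequality (an instance of Shearer's inequality for the
2-cover of the edges of a graph by the vertex stars): the square of the number
of graphs in a family is at most the product over all vertices of the number of
distinct rows appearing in the family. -/
lemma key_ineq : ∀ (k : ℕ) (M : Finset (SimpleGraph (Fin k))),
    M.card ^ 2 ≤ ∏ v : Fin k, (M.image (fun G => gRow G v)).card := by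
  intro k
  induction k with
  | zero =>
    intro M
    have h1 : M.card ≤ 1 := by
      refine Finset.card_le_one.2 ?_
      intro a _ b _
      apply SimpleGraph.ext
      funext i
      exact i.elim0
    calc M.card ^ 2 ≤ 1 ^ 2 := Nat.pow_le_pow_left h1 2
      _ = 1 := one_pow 2
      _ ≤ _ := by
          simp
  | succ k ih =>
    intro M
    classical
    set u : Fin (k+1) := Fin.last k with hu
    set R : Finset (Finset (Fin (k+1))) := M.image (fun G => gRow G u) with hR
    set Mr : Finset (Fin (k+1)) → Finset (SimpleGraph (Fin (k+1))) :=
      fun r => M.filter (fun G => gRow G u = r) with hMr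
    set Nr : Finset (Fin (k+1)) → Finset (SimpleGraph (Fin k)) :=
      fun r => (Mr r).image gRes with hNr
    set Z : Fin k → Bool → Finset (Finset (Fin (k+1))) :=
      fun v b => (M.image (fun G => gRow G v.castSucc)).filter
        (fun T => decide (Fin.last k ∈ T) = b) with hZ
    -- fiber decomposition
    have hfib : M.card = ∑ r ∈ R, (Mr r).card :=
      Finset.card_eq_sum_card_fiberwise (fun G hG => Finset.mem_image_of_mem _ hG)
    -- |Mr| = |Nr|
    have hcard_res : ∀ r, (Mr r).card = (Nr r).card := by
      intro r
      rw [hNr]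
      refine (Finset.card_image_of_injOn ?_).symm
      intro G hG G' hG' hres
      have h1 := (Finset.mem_filter.1 hG).2
      have h2 := (Finset.mem_filter.1 hG').2
      exact res_inj (h1.trans h2.symm) hres
    -- rows of Nr inject into Z slices
    have hrowsZ : ∀ r ∈ R, ∀ v : Fin k,
        ((Nr r).image (fun H => gRow H v)).card ≤ (Z v (decide (v.castSucc ∈ r))).card := by
      intro r _ v
      apply Finset.card_le_card_of_injOn (extend (decide (v.castSucc ∈ r)))
      · intro T hT
        obtain ⟨H, hH, rfl⟩ := Finset.mem_image.1 hT
        obtain ⟨G, hG, rfl⟩ := Finset.mem_image.1 hH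
        have hGM : G ∈ M := (Finset.mem_filter.1 hG).1
        have hGr : gRow G u = r := (Finset.mem_filter.1 hG).2
        have hext : extend (decide (v.castSucc ∈ r)) (gRow (gRes G) v) = gRow G v.castSucc := by
          ext w
          induction w using Fin.lastCases with
          | last =>
            rw [mem_extend_last, decide_eq_true_eq, mem_gRow, ← hGr, mem_gRow,
              SimpleGraph.adj_comm]
          | cast x =>
            rw [mem_extend_cast, mem_gRow, mem_gRow, gRes_adj]
        rw [hext, hZ]
        refine Finset.mem_filter.2 ⟨Finset.mem_image_of_mem _ hGM, ?_⟩
        rw [decide_eq_decide, mem_gRow, ← hGr, mem_gRow, SimpleGraph.adj_comm]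
      · intro T _ T' _ h
        exact extend_injective _ h
    -- the bit map on R is injective
    have hbit_inj : Set.InjOn (fun r => (fun v : Fin k => decide (v.castSucc ∈ r)))
        (R : Set (Finset (Fin (k+1)))) := by
      intro r hr r' hr' h
      obtain ⟨G, _, rfl⟩ := Finset.mem_image.1 hr
      obtain ⟨G', _, rfl⟩ := Finset.mem_image.1 hr'
      ext w
      induction w using Fin.lastCases with
      | last =>
        simp only [mem_gRow]
        exact iff_of_false (G.loopless.irrefl _) (G'.loopless.irrefl _)
      | cast x =>
        have := congrFun h x
        simpa [decide_eq_decide] using this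
    -- Cauchy-Schwarz
    have hCS : M.card ^ 2 ≤ R.card * ∑ r ∈ R, (Mr r).card ^ 2 := by
      rw [hfib]
      exact sq_sum_le_card_mul_sum_sq
    -- per fiber bound
    have hper : ∀ r ∈ R, (Mr r).card ^ 2 ≤ ∏ v : Fin k, (Z v (decide (v.castSucc ∈ r))).card := by
      intro r hr
      rw [hcard_res r]
      calc (Nr r).card ^ 2 ≤ ∏ v : Fin k, ((Nr r).image (fun H => gRow H v)).card := ih (Nr r)
        _ ≤ ∏ v : Fin k, (Z v (decide (v.castSucc ∈ r))).card :=
            Finset.prod_le_prod (fun _ _ => Nat.zero_le _) (fun v _ => hrowsZ r hr v)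
    -- sum over all boolean patterns
    have hsum : ∑ r ∈ R, ∏ v : Fin k, (Z v (decide (v.castSucc ∈ r))).card
        ≤ ∑ ρ : Fin k → Bool, ∏ v : Fin k, (Z v (ρ v)).card := by
      have hinj : ∀ x ∈ R, ∀ y ∈ R,
          (fun v : Fin k => decide (v.castSucc ∈ x)) = (fun v : Fin k => decide (v.castSucc ∈ y))
          → x = y := fun x hx y hy h => hbit_inj (Finset.mem_coe.2 hx) (Finset.mem_coe.2 hy) h
      calc ∑ r ∈ R, ∏ v : Fin k, (Z v (decide (v.castSucc ∈ r))).card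
          = ∑ ρ ∈ R.image (fun r => (fun v : Fin k => decide (v.castSucc ∈ r))),
              ∏ v : Fin k, (Z v (ρ v)).card :=
            (Finset.sum_image (f := fun ρ : Fin k → Bool => ∏ v : Fin k, (Z v (ρ v)).card)
              hinj).symm
        _ ≤ ∑ ρ : Fin k → Bool, ∏ v : Fin k, (Z v (ρ v)).card :=
            Finset.sum_le_sum_of_subset (Finset.subset_univ _)
    have hprod : ∑ ρ : Fin k → Bool, ∏ v : Fin k, (Z v (ρ v)).card
        = ∏ v : Fin k, ((Z v true).card + (Z v false).card) := by
      have := Finset.prod_univ_sum (fun _ : Fin k => (Finset.univ : Finset Bool))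
        (fun v b => (Z v b).card)
      rw [Fintype.piFinset_univ] at this
      rw [← this]
      refine Finset.prod_congr rfl ?_
      intro v _
      rw [show (Finset.univ : Finset Bool) = {true, false} by rfl]
      simp
    have hZsum : ∀ v : Fin k, (Z v true).card + (Z v false).card
        = (M.image (fun G => gRow G v.castSucc)).card := by
      intro v
      have := Finset.card_filter_add_card_filter_not
        (s := M.image (fun G => gRow G v.castSucc))
        (p := fun T => decide (Fin.last k ∈ T) = true)
      have e2 : Z v false = (M.image (fun G => gRow G v.castSucc)).filter
          (fun T => ¬ (decide (Fin.last k ∈ T) = true)) := by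
        show ((M.image (fun G => gRow G v.castSucc)).filter
          (fun T => decide (Fin.last k ∈ T) = false)) = _
        apply Finset.filter_congr
        intro T _
        simp
      show ((M.image (fun G => gRow G v.castSucc)).filter
          (fun T => decide (Fin.last k ∈ T) = true)).card + (Z v false).card = _
      rw [e2]
      exact this
    calc M.card ^ 2 ≤ R.card * ∑ r ∈ R, (Mr r).card ^ 2 := hCS
      _ ≤ R.card * ∑ r ∈ R, ∏ v : Fin k, (Z v (decide (v.castSucc ∈ r))).card := by
          exact Nat.mul_le_mul_left _ (Finset.sum_le_sum hper)
      _ ≤ R.card * ∑ ρ : Fin k → Bool, ∏ v : Fin k, (Z v (ρ v)).card :=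
          Nat.mul_le_mul_left _ hsum
      _ = R.card * ∏ v : Fin k, ((Z v true).card + (Z v false).card) := by rw [hprod]
      _ = R.card * ∏ v : Fin k, (M.image (fun G => gRow G v.castSucc)).card := by
          congr 1
          exact Finset.prod_congr rfl (fun v _ => hZsum v)
      _ = ∏ v : Fin (k+1), (M.image (fun G => gRow G v)).card := by
          rw [Fin.prod_univ_castSucc (f := fun v => (M.image (fun G => gRow G v)).card)]
          rw [mul_comm]

/-- In a spanning-star-free family, the set of rows at any vertex avoids
complementary pairs, so it has at most `2 ^ (n-2)` elements. -/
lemma Y_card_le {n : ℕ} (hn : 2 ≤ n) (M : Finset (SimpleGraph (Fin n)))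
    (hM : ∀ G ∈ M, ∀ G' ∈ M, G ≠ G' → ¬ HasSpanningStar (symmDiffG G G')) (v : Fin n) :
    (M.image (fun G => gRow G v)).card ≤ 2 ^ (n - 2) := by
  classical
  set Y : Finset (Finset (Fin n)) := M.image (fun G => gRow G v) with hY
  set A : Finset (Fin n) := Finset.univ.erase v with hA
  have hYA : ∀ T ∈ Y, T ⊆ A := by
    intro T hT
    obtain ⟨G, _, rfl⟩ := Finset.mem_image.1 hT
    intro w hw
    exact Finset.mem_erase.2 ⟨(mem_gRow.1 hw).ne', Finset.mem_univ _⟩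
  set ι : Finset (Fin n) → Finset (Fin n) := fun T => A \ T with hι
  have hι2 : ∀ T, T ⊆ A → ι (ι T) = T := by
    intro T hT
    rw [hι]
    simp only
    exact Finset.sdiff_sdiff_eq_self hT
  have hex : ∃ w : Fin n, w ≠ v := by
    refine Fintype.exists_ne_of_one_lt_card ?_ v
    rw [Fintype.card_fin]; omega
  have hdisj : Disjoint Y (Y.image ι) := by
    rw [Finset.disjoint_left]
    rintro T hT hT'
    obtain ⟨G, hG, rfl⟩ := Finset.mem_image.1 hT
    obtain ⟨T', hT'mem, hTT'⟩ := Finset.mem_image.1 hT'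
    obtain ⟨G', hG', rfl⟩ := Finset.mem_image.1 hT'mem
    have hkey : ∀ w : Fin n, w ≠ v → (G.Adj v w ↔ ¬ G'.Adj v w) := by
      intro w hw
      have h1 : w ∈ gRow G v ↔ G.Adj v w := mem_gRow
      have h2 : w ∈ ι (gRow G' v) ↔ (w ∈ A ∧ ¬ G'.Adj v w) := by
        rw [hι]
        simp only [Finset.mem_sdiff, mem_gRow]
      have hwA : w ∈ A := Finset.mem_erase.2 ⟨hw, Finset.mem_univ _⟩
      rw [← h1, ← hTT', h2]
      tauto
    have hne : G ≠ G' := by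
      rintro rfl
      obtain ⟨w, hw⟩ := hex
      exact absurd (hkey w hw) (by tauto)
    refine hM G hG G' hG' hne ⟨v, ?_⟩
    intro w hw
    by_cases h : G.Adj v w
    · exact Or.inl ⟨h, (hkey w hw).1 h⟩
    · refine Or.inr ⟨?_, h⟩
      by_contra h'
      exact h ((hkey w hw).2 h')
  have hcardι : (Y.image ι).card = Y.card := by
    apply Finset.card_image_of_injOn
    intro T hT T' hT' h
    rw [← hι2 T (hYA T hT), h, hι2 T' (hYA T' hT')]
  have hsub : Y ∪ Y.image ι ⊆ A.powerset := by
    intro T hT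
    rcases Finset.mem_union.1 hT with h | h
    · exact Finset.mem_powerset.2 (hYA T h)
    · obtain ⟨T', _, rfl⟩ := Finset.mem_image.1 h
      exact Finset.mem_powerset.2 (Finset.sdiff_subset)
  have hcardA : A.card = n - 1 := by
    rw [hA, Finset.card_erase_of_mem (Finset.mem_univ _), Finset.card_univ, Fintype.card_fin]
  have h2Y : Y.card + Y.card ≤ 2 ^ (n - 1) := by
    calc Y.card + Y.card = Y.card + (Y.image ι).card := by rw [hcardι]
      _ = (Y ∪ Y.image ι).card := (Finset.card_union_of_disjoint hdisj).symm
      _ ≤ A.powerset.card := Finset.card_le_card hsub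
      _ = 2 ^ (n - 1) := by rw [Finset.card_powerset, hcardA]
  have hpow : 2 ^ (n - 1) = 2 ^ (n - 2) + 2 ^ (n - 2) := by
    have : n - 1 = (n - 2) + 1 := by omega
    rw [this, pow_succ]
    omega
  omega

/-! ### The lower bound construction -/

abbrev PIdx (n : ℕ) := {p : Fin n × Fin n // p.1 < p.2 ∧ ¬ (p.1.val / 2 = p.2.val / 2)}

def toG {n : ℕ} (f : PIdx n → Bool) : SimpleGraph (Fin n) :=
  SimpleGraph.fromRel (fun i j =>
    ∃ h : i < j ∧ ¬ (i.val / 2 = j.val / 2), f ⟨(i, j), h⟩ = true)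

lemma toG_adj {n : ℕ} (f : PIdx n → Bool) {i j : Fin n} (h1 : i < j)
    (h2 : ¬ (i.val / 2 = j.val / 2)) :
    (toG f).Adj i j ↔ f ⟨(i, j), ⟨h1, h2⟩⟩ = true := by
  rw [toG, SimpleGraph.fromRel_adj]
  constructor
  · rintro ⟨-, ⟨h, hf⟩ | ⟨h, hf⟩⟩
    · exact hf
    · exact absurd h.1 (asymm h1)
  · intro hf
    exact ⟨h1.ne, Or.inl ⟨⟨h1, h2⟩, hf⟩⟩

lemma toG_block {n : ℕ} (f : PIdx n → Bool) {i j : Fin n} (h : i.val / 2 = j.val / 2) :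
    ¬ (toG f).Adj i j := by
  rw [toG, SimpleGraph.fromRel_adj]
  rintro ⟨-, ⟨hh, -⟩ | ⟨hh, -⟩⟩
  · exact hh.2 h
  · exact hh.2 h.symm

lemma toG_inj {n : ℕ} : Function.Injective (toG (n := n)) := by
  intro f g h
  funext b
  rcases b with ⟨⟨i, j⟩, h1, h2⟩
  have := (toG_adj f h1 h2).symm.trans (h ▸ toG_adj g h1 h2)
  cases hf : f ⟨(i, j), ⟨h1, h2⟩⟩ <;> cases hg : g ⟨(i, j), ⟨h1, h2⟩⟩ <;> simp_all

lemma count_pidx {n : ℕ} (hn : 2 ≤ n) (he : Even n) :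
    Fintype.card (PIdx n) = n * (n - 2) / 2 := by
  classical
  have hn2 : n % 2 = 0 := Nat.even_iff.1 he
  rw [Fintype.card_subtype]
  set slt : Finset (Fin n × Fin n) := Finset.univ.filter (fun q => q.1 < q.2) with hslt
  set seq : Finset (Fin n × Fin n) :=
    Finset.univ.filter (fun q => q.1 < q.2 ∧ q.1.val / 2 = q.2.val / 2) with hseq
  set sne : Finset (Fin n × Fin n) :=
    Finset.univ.filter (fun q => q.1 < q.2 ∧ ¬ (q.1.val / 2 = q.2.val / 2)) with hsne
  have hsplit : seq.card + sne.card = slt.card := by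
    have h := Finset.card_filter_add_card_filter_not
      (s := slt) (p := fun q : Fin n × Fin n => q.1.val / 2 = q.2.val / 2)
    rw [hslt, Finset.filter_filter, Finset.filter_filter] at h
    exact h
  set sgt : Finset (Fin n × Fin n) := Finset.univ.filter (fun q => q.2 < q.1) with hsgt
  have hltgt : slt.card = sgt.card := by
    refine Finset.card_bij' (fun q _ => (q.2, q.1)) (fun q _ => (q.2, q.1)) ?_ ?_ ?_ ?_
    · intro q hq
      simp only [hsgt, Finset.mem_filter, Finset.mem_univ, true_and]
      exact (Finset.mem_filter.1 hq).2
    · intro q hq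
      simp only [hslt, Finset.mem_filter, Finset.mem_univ, true_and]
      exact (Finset.mem_filter.1 hq).2
    · intro q _; rfl
    · intro q _; rfl
  have hunion : slt.card + sgt.card = n * n - n := by
    have hdisj : Disjoint slt sgt := by
      rw [Finset.disjoint_left]
      intro q hq hq'
      exact absurd (Finset.mem_filter.1 hq').2 (asymm (Finset.mem_filter.1 hq).2)
    have hcup : slt ∪ sgt = (Finset.univ : Finset (Fin n)).offDiag := by
      ext q
      simp only [hslt, hsgt, Finset.mem_union, Finset.mem_filter, Finset.mem_univ, true_and,
        Finset.mem_offDiag]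
      constructor
      · rintro (h | h) he
        · exact h.ne he
        · exact h.ne' he
      · intro h
        exact lt_or_gt_of_ne (fun he => h he)
    rw [← Finset.card_union_of_disjoint hdisj, hcup, Finset.offDiag_card, Finset.card_univ,
      Fintype.card_fin]
  have hseqcard : seq.card = n / 2 := by
    rw [show (n / 2) = (Finset.range (n / 2)).card from (Finset.card_range _).symm]
    refine Finset.card_bij' (fun q _ => q.1.val / 2)
      (fun k hk => ((⟨2 * k, by
          have := Finset.mem_range.1 hk; omega⟩ : Fin n),
        (⟨2 * k + 1, by have := Finset.mem_range.1 hk; omega⟩ : Fin n))) ?_ ?_ ?_ ?_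
    · intro q hq
      obtain ⟨-, hlt, hblk⟩ := Finset.mem_filter.1 hq
      have h1 : q.1.val < q.2.val := hlt
      have h2 : q.2.val < n := q.2.isLt
      have h3 : q.1.val / 2 = q.2.val / 2 := hblk
      refine Finset.mem_range.2 ?_
      show q.1.val / 2 < n / 2
      omega
    · intro k hk
      have hk' := Finset.mem_range.1 hk
      refine Finset.mem_filter.2 ⟨Finset.mem_univ _, ?_, ?_⟩
      · show (2 * k : ℕ) < 2 * k + 1
        omega
      · show (2 * k) / 2 = (2 * k + 1) / 2
        omega
    · intro q hq
      obtain ⟨-, hlt, hblk⟩ := Finset.mem_filter.1 hq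
      have h1 : q.1.val < q.2.val := hlt
      have h2 : q.2.val < n := q.2.isLt
      have h3 : q.1.val / 2 = q.2.val / 2 := hblk
      have e1 : (⟨2 * (q.1.val / 2), by omega⟩ : Fin n) = q.1 := by
        apply Fin.ext
        show 2 * (q.1.val / 2) = q.1.val
        omega
      have e2 : (⟨2 * (q.1.val / 2) + 1, by omega⟩ : Fin n) = q.2 := by
        apply Fin.ext
        show 2 * (q.1.val / 2) + 1 = q.2.val
        omega
      exact Prod.ext e1 e2
    · intro k hk
      show (2 * k) / 2 = k
      omega
  have hfinal : 2 * slt.card = n * n - n := by omega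
  have : n * (n - 2) = n * n - 2 * n := by
    rw [Nat.mul_sub]
    ring_nf
  omega

theorem stmt_7 (n : ℕ) (hn : 2 ≤ n) (he : Even n) :
    IsGreatest {m : ℕ | ∃ 𝓜 : Finset (SimpleGraph (Fin n)),
        (∀ G ∈ 𝓜, ∀ G' ∈ 𝓜, G ≠ G' → ¬ HasSpanningStar (symmDiffG G G')) ∧ 𝓜.card = m}
      (2 ^ (n * (n - 2) / 2)) := by
  classical
  have hn2 : n % 2 = 0 := Nat.even_iff.1 he
  constructor
  · -- membership: the family of all graphs avoiding the perfect matching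
    refine ⟨(Finset.univ : Finset (PIdx n → Bool)).image toG, ?_, ?_⟩
    · intro G hG G' hG' hne hstar
      obtain ⟨f, _, rfl⟩ := Finset.mem_image.1 hG
      obtain ⟨g, _, rfl⟩ := Finset.mem_image.1 hG'
      obtain ⟨v, hv⟩ := hstar
      -- the matching partner of v
      have hvlt : v.val < n := v.isLt
      have hex : ∃ wv : ℕ, ∃ hwlt : wv < n, wv ≠ v.val ∧ v.val / 2 = wv / 2 := by
        by_cases hp : v.val % 2 = 0
        · exact ⟨v.val + 1, by omega, by omega, by omega⟩
        · exact ⟨v.val - 1, by omega, by omega, by omega⟩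
      obtain ⟨wv, hwlt, hwne, hblk⟩ := hex
      have hne' : (⟨wv, hwlt⟩ : Fin n) ≠ v := fun h => hwne (congrArg Fin.val h)
      rcases hv ⟨wv, hwlt⟩ hne' with ⟨h1, -⟩ | ⟨h1, -⟩
      · exact toG_block f hblk h1
      · exact toG_block g hblk h1
    · rw [Finset.card_image_of_injective _ toG_inj, Finset.card_univ, Fintype.card_fun,
        Fintype.card_bool, count_pidx hn he]
  · -- upper bound
    rintro m ⟨M, hM, rfl⟩
    have hkey := key_ineq n M
    have hY : ∀ v : Fin n, (M.image (fun G => gRow G v)).card ≤ 2 ^ (n - 2) :=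
      fun v => Y_card_le hn M hM v
    have h2 : M.card ^ 2 ≤ 2 ^ (n * (n - 2)) := by
      calc M.card ^ 2 ≤ ∏ v : Fin n, (M.image (fun G => gRow G v)).card := hkey
        _ ≤ ∏ _v : Fin n, 2 ^ (n - 2) :=
            Finset.prod_le_prod (fun _ _ => Nat.zero_le _) (fun v _ => hY v)
        _ = (2 ^ (n - 2)) ^ n := by
            rw [Finset.prod_const, Finset.card_univ, Fintype.card_fin]
        _ = 2 ^ ((n - 2) * n) := (pow_mul 2 (n - 2) n).symm
        _ = 2 ^ (n * (n - 2)) := by rw [Nat.mul_comm]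
    have hdvd : 2 ∣ n * (n - 2) := Dvd.dvd.mul_right (Nat.dvd_of_mod_eq_zero hn2) _
    have hsq : (2 ^ (n * (n - 2) / 2)) ^ 2 = 2 ^ (n * (n - 2)) := by
      rw [← pow_mul, Nat.div_mul_cancel hdvd]
    have : M.card ^ 2 ≤ (2 ^ (n * (n - 2) / 2)) ^ 2 := by rw [hsq]; exact h2
    exact (Nat.pow_le_pow_iff_left (by norm_num)).1 this
end

section
/- For each n ≥ 1 let M_odd(n) be the maximum cardinality of a family 𝓖 of simple graphs on the vertex set Fin n such that for any two distinct members G, G' ∈ 𝓖 the symmetric difference G ⊕ G' contains a cycle of odd length. Then the sequence (2 / (n(n−1))) · log₂ M_odd(n) converges to 1/2 as n → ∞. -/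
open SimpleGraph Filter

/-- A graph contains a cycle of odd length. -/
def ContainsOddCycle {V : Type*} (G : SimpleGraph V) : Prop :=
  ∃ (v : V) (p : G.Walk v v), p.IsCycle ∧ Odd p.length

section Aux
open SimpleGraph Walk


lemma odd_cycle_aux {V : Type*} {H : SimpleGraph V} (N : ℕ) :
    ∀ {u : V} (p : H.Walk u u), p.length ≤ N → Odd p.length → ContainsOddCycle H := by
  classical
  induction N with
  | zero =>
    intro u p hl ho
    rw [Nat.le_zero.mp hl] at ho
    simp at ho
  | succ N ih =>
    intro u p hlen hodd
    by_cases hnodup : p.support.tail.Nodup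
    · cases p with
      | nil => simp at hodd
      | @cons _ x _ h d =>
        have hdp : d.IsPath := IsPath.mk' (by simpa [support_cons] using hnodup)
        by_cases he : s(u, x) ∈ d.edges
        · exfalso
          have hrev : s(u, x) ∈ d.reverse.edges := by
            rw [edges_reverse, List.mem_reverse]; exact he
          have hnn : ¬ d.reverse.Nil := by
            intro hnil
            exact H.loopless.irrefl u (hnil.eq ▸ h)
          rcases not_nil_iff.mp hnn with ⟨y, hady, e, hde⟩
          have hrp : d.reverse.IsPath := hdp.reverse
          rw [hde] at hrev hrp
          rw [edges_cons] at hrev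
          rcases List.mem_cons.mp hrev with heq | hmem
          · have hxy : x = y := by
              rcases Sym2.eq_iff.mp heq with ⟨-, h2⟩ | ⟨h1, h2⟩
              · exact h2
              · exact absurd h2.symm h.ne
            subst hxy
            have he0 : e = Walk.nil := (isPath_iff_eq_nil (p := e)).mp hrp.of_cons
            have hdl : d.length = 1 := by
              have h2 := congrArg Walk.length hde
              rw [he0] at h2
              simpa using h2
            rw [Walk.length_cons, hdl] at hodd
            simp [Nat.odd_iff] at hodd
          · have h1 : u ∈ e.support := e.fst_mem_support_of_mem_edges hmem
            have h2 : u ∉ e.support := by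
              have := hrp.support_nodup
              simp only [support_cons, List.nodup_cons] at this
              exact this.1
            exact h2 h1
        · exact ⟨u, Walk.cons h d, (cons_isCycle_iff d h).mpr ⟨hdp, he⟩, hodd⟩
    · -- there is a repeated vertex in the tail; rotate and split
      obtain ⟨w, hw⟩ : ∃ w, 2 ≤ p.support.tail.count w := by
        by_contra hc
        push_neg at hc
        exact hnodup (List.nodup_iff_count_le_one.mpr fun a => by
          have := hc a; omega)
      have hwmem : w ∈ p.support := by
        apply List.mem_of_mem_tail
        rw [← List.count_pos_iff]
        omega
      set c := p.rotate w hwmem with hc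
      have hclen : c.length = p.length := by
        have hspec := congrArg Walk.length (p.take_spec hwmem)
        rw [length_append] at hspec
        rw [hc]
        unfold Walk.rotate
        rw [length_append]
        omega
      have hcount : 2 ≤ c.support.tail.count w := by
        rw [((support_rotate p w hwmem).perm).count_eq]
        exact hw
      cases hcc : c with
      | nil =>
        rw [hcc] at hclen
        simp at hclen
        rw [← hclen] at hodd
        simp at hodd
      | @cons _ y _ hadj d =>
        rw [hcc] at hcount hclen
        have hwd : w ∈ d.support := Walk.end_mem_support d
        have hq1 : (d.takeUntil w hwd).support.count w = 1 :=
          count_support_takeUntil_eq_one d hwd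
        have hsplit := d.take_spec hwd
        have hlens : (d.takeUntil w hwd).length + (d.dropUntil w hwd).length = d.length := by
          have := congrArg Walk.length hsplit
          rw [length_append] at this
          omega
        have hcountd : 2 ≤ d.support.count w := by
          simpa [support_cons] using hcount
        have hrtail : 1 ≤ (d.dropUntil w hwd).support.tail.count w := by
          have := congrArg (fun L => List.count w L) (congrArg Walk.support hsplit)
          simp only [support_append, List.count_append] at this
          omega
        have hrlen : 1 ≤ (d.dropUntil w hwd).length := by
          by_contra hr0
          push_neg at hr0
          have : (d.dropUntil w hwd).length = 0 := by omega
          have hnil : (d.dropUntil w hwd).support.tail = [] := by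
            have hsl := Walk.length_support (d.dropUntil w hwd)
            have htl : (d.dropUntil w hwd).support.tail.length = 0 := by
              have := List.length_tail (l := (d.dropUntil w hwd).support)
              omega
            exact List.length_eq_zero_iff.mp htl
          rw [hnil] at hrtail
          simp at hrtail
        have hclen' : d.length + 1 = p.length := by
          rw [← hclen]; simp [Walk.length_cons]
        have hsum : ((Walk.cons hadj (d.takeUntil w hwd)).length)
            + ((d.dropUntil w hwd)).length = p.length := by
          rw [Walk.length_cons]
          omega
        have hone : 1 ≤ (Walk.cons hadj (d.takeUntil w hwd)).length := by
          simp [Walk.length_cons]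
        have hodd2 : Odd ((Walk.cons hadj (d.takeUntil w hwd)).length)
            ∨ Odd ((d.dropUntil w hwd)).length := by
          rw [← hsum] at hodd
          simp only [Nat.odd_iff] at hodd ⊢
          omega
        rcases hodd2 with ho1 | ho2
        · exact ih (Walk.cons hadj (d.takeUntil w hwd)) (by omega) ho1
        · exact ih ((d.dropUntil w hwd)) (by
            have hql : 0 ≤ (d.takeUntil w hwd).length := Nat.zero_le _
            omega) ho2


lemma containsOddCycle_of_odd_closed_walk {V : Type*} {H : SimpleGraph V} {u : V}
    (p : H.Walk u u) (h : Odd p.length) : ContainsOddCycle H :=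
  odd_cycle_aux p.length p le_rfl h

lemma not_containsOddCycle_of_coloring {V : Type*} {H : SimpleGraph V}
    (c : V → Bool) (hc : ∀ {a b : V}, H.Adj a b → c a ≠ c b) :
    ¬ ContainsOddCycle H := by
  rintro ⟨v, p, -, hodd⟩
  have col : H.Coloring Bool := Coloring.mk c fun h => hc h
  have := (col.odd_length_iff_not_congr p).mp hodd
  simp at this

lemma exists_coloring_of_not_containsOddCycle {V : Type*} {H : SimpleGraph V}
    (h : ¬ ContainsOddCycle H) :
    ∃ c : V → Bool, ∀ {a b : V}, H.Adj a b → c a ≠ c b := by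
  classical
  have hrep : ∀ v : V, H.Reachable v (H.connectedComponentMk v).out := by
    intro v
    apply ConnectedComponent.exact
    exact (Quot.out_eq (H.connectedComponentMk v)).symm
  set pw : ∀ v : V, H.Walk v (H.connectedComponentMk v).out := fun v => (hrep v).some
  refine ⟨fun v => decide (Odd (pw v).length), ?_⟩
  intro a b hab heq
  have hcomp : H.connectedComponentMk a = H.connectedComponentMk b :=
    ConnectedComponent.connectedComponentMk_eq_of_adj hab
  have hout : (H.connectedComponentMk b).out = (H.connectedComponentMk a).out := by rw [hcomp]
  -- closed walk at a : a -- b --(pw b)-- rep --(pw a).reverse-- a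
  set q : H.Walk a a :=
    Walk.cons hab (((pw b).copy rfl hout).append (pw a).reverse) with hq
  have hlen : q.length = 1 + ((pw b).length + (pw a).length) := by
    simp [hq, Walk.length_cons, Walk.length_append, Walk.length_copy, Walk.length_reverse]
    ring
  have hpar : Odd (pw a).length ↔ Odd (pw b).length := by
    constructor <;> intro hx <;> simp_all
  apply h
  apply containsOddCycle_of_odd_closed_walk q
  rw [hlen]
  simp only [Nat.odd_iff] at hpar ⊢
  omega


-- double counting: ordered increasing pairs within a class
lemma two_mul_card_pairs_le {n : ℕ} (P : Fin n → Prop) [DecidablePred P] :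
    2 * Fintype.card {p : Fin n × Fin n // p.1 < p.2 ∧ P p.1 ∧ P p.2}
      ≤ (Fintype.card {a : Fin n // P a}) ^ 2 := by
  classical
  set X := {p : Fin n × Fin n // p.1 < p.2 ∧ P p.1 ∧ P p.2}
  have key : Fintype.card (X ⊕ X) ≤ Fintype.card ({a : Fin n // P a} × {a : Fin n // P a}) := by
    apply Fintype.card_le_of_injective
      (Sum.elim (fun x => (⟨x.1.1, x.2.2.1⟩, ⟨x.1.2, x.2.2.2⟩))
                (fun x => (⟨x.1.2, x.2.2.2⟩, ⟨x.1.1, x.2.2.1⟩)))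
    rintro (a | a) (b | b) h <;>
      simp only [Sum.elim_inl, Sum.elim_inr, Prod.mk.injEq, Subtype.mk.injEq] at h
    · exact congrArg Sum.inl (Subtype.ext (Prod.ext h.1 h.2))
    · exact absurd (h.1 ▸ h.2 ▸ b.2.1) (lt_asymm a.2.1)
    · exact absurd (h.1 ▸ h.2 ▸ a.2.1) (lt_asymm b.2.1)
    · exact congrArg Sum.inr (Subtype.ext (Prod.ext h.2 h.1))
  rw [Fintype.card_sum, Fintype.card_prod] at key
  have : 2 * Fintype.card X = Fintype.card X + Fintype.card X := by ring
  rw [this, sq]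
  exact key

-- cross pairs count
lemma card_cross_le {n : ℕ} (c : Fin n → Bool) :
    Fintype.card {p : Fin n × Fin n // p.1 < p.2 ∧ c p.1 ≠ c p.2} ≤ n ^ 2 / 4 := by
  classical
  set k := Fintype.card {a : Fin n // c a = true} with hk
  set m := Fintype.card {a : Fin n // c a = false} with hm
  have hkm : k + m = n := by
    rw [hk, hm]
    have : Fintype.card {a : Fin n // c a = false}
        = Fintype.card {a : Fin n // ¬ (c a = true)} :=
      Fintype.card_congr (Equiv.subtypeEquivRight (by simp))
    rw [this, Fintype.card_subtype_compl]
    have h1 : Fintype.card {a : Fin n // c a = true} ≤ Fintype.card (Fin n) :=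
      Fintype.card_subtype_le _
    simp only [Fintype.card_fin] at h1 ⊢
    omega
  have key : Fintype.card {p : Fin n × Fin n // p.1 < p.2 ∧ c p.1 ≠ c p.2}
      ≤ Fintype.card ({a : Fin n // c a = true} × {a : Fin n // c a = false}) := by
    apply Fintype.card_le_of_injective (fun x =>
      if h : c x.1.1 = true then
        (⟨x.1.1, h⟩, ⟨x.1.2, Bool.eq_false_iff.mpr (fun h2 => x.2.2 (h.trans h2.symm))⟩)
      else
        (⟨x.1.2, Bool.ne_false_iff.mp
            (fun h2 => x.2.2 ((Bool.eq_false_iff.mpr h).trans h2.symm))⟩,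
         ⟨x.1.1, Bool.eq_false_iff.mpr h⟩))
    intro a b hab
    dsimp only at hab
    by_cases ha : c a.1.1 = true <;> by_cases hb : c b.1.1 = true
    · rw [dif_pos ha, dif_pos hb] at hab
      simp only [Prod.mk.injEq, Subtype.mk.injEq] at hab
      exact Subtype.ext (Prod.ext hab.1 hab.2)
    · rw [dif_pos ha, dif_neg hb] at hab
      simp only [Prod.mk.injEq, Subtype.mk.injEq] at hab
      exact absurd a.2.1 (by rw [hab.1, hab.2]; exact lt_asymm b.2.1)
    · rw [dif_neg ha, dif_pos hb] at hab
      simp only [Prod.mk.injEq, Subtype.mk.injEq] at hab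
      exact absurd a.2.1 (by rw [hab.2, hab.1]; exact lt_asymm b.2.1)
    · rw [dif_neg ha, dif_neg hb] at hab
      simp only [Prod.mk.injEq, Subtype.mk.injEq] at hab
      exact Subtype.ext (Prod.ext hab.2 hab.1)
  rw [Fintype.card_prod, ← hk, ← hm] at key
  have h4 : 4 * (k * m) ≤ n ^ 2 := by nlinarith [sq_nonneg (k - m : ℤ), hkm]
  omega

lemma card_lt_half (n : ℕ) : Fintype.card {a : Fin n // (a : ℕ) < n / 2} = n / 2 := by
  have e : {a : Fin n // (a : ℕ) < n / 2} ≃ Fin (n / 2) :=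
    { toFun := fun a => ⟨a.1.1, a.2⟩
      invFun := fun i => ⟨⟨i.1, lt_of_lt_of_le i.2 (Nat.div_le_self n 2)⟩, i.2⟩
      left_inv := fun a => Subtype.ext (Fin.ext rfl)
      right_inv := fun i => rfl }
  rw [Fintype.card_congr e, Fintype.card_fin]

lemma card_same_side_le (n : ℕ) :
    Fintype.card {p : Fin n × Fin n //
        p.1 < p.2 ∧ decide ((p.1 : ℕ) < n / 2) = decide ((p.2 : ℕ) < n / 2)}
      ≤ n ^ 2 / 4 + 1 := by
  classical
  set P : Fin n → Prop := fun a => (a : ℕ) < n / 2 with hP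
  have hsplit : Fintype.card {p : Fin n × Fin n //
        p.1 < p.2 ∧ decide ((p.1 : ℕ) < n / 2) = decide ((p.2 : ℕ) < n / 2)}
      ≤ Fintype.card ({p : Fin n × Fin n // p.1 < p.2 ∧ P p.1 ∧ P p.2}
          ⊕ {p : Fin n × Fin n // p.1 < p.2 ∧ ¬ P p.1 ∧ ¬ P p.2}) := by
    apply Fintype.card_le_of_injective (fun x =>
      if h : P x.1.1 then
        Sum.inl ⟨x.1, x.2.1, h, (decide_eq_decide.mp x.2.2).mp h⟩
      else
        Sum.inr ⟨x.1, x.2.1, h, fun h2 => h ((decide_eq_decide.mp x.2.2).mpr h2)⟩)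
    intro a b h
    dsimp only at h
    by_cases ha : P a.1.1 <;> by_cases hb : P b.1.1
    · rw [dif_pos ha, dif_pos hb] at h
      simp only [Sum.inl.injEq, Subtype.mk.injEq] at h
      exact Subtype.ext h
    · rw [dif_pos ha, dif_neg hb] at h
      simp at h
    · rw [dif_neg ha, dif_pos hb] at h
      simp at h
    · rw [dif_neg ha, dif_neg hb] at h
      simp only [Sum.inr.injEq, Subtype.mk.injEq] at h
      exact Subtype.ext h
  rw [Fintype.card_sum] at hsplit
  have hT := two_mul_card_pairs_le P
  have hF := two_mul_card_pairs_le (fun a => ¬ P a)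
  have hk : Fintype.card {a : Fin n // P a} = n / 2 := card_lt_half n
  have hm : Fintype.card {a : Fin n // ¬ P a} = n - n / 2 := by
    rw [Fintype.card_subtype_compl, hk, Fintype.card_fin]
  rw [hk] at hT
  rw [hm] at hF
  have key : 2 * (n / 2) ^ 2 + 2 * (n - n / 2) ^ 2 ≤ n ^ 2 + 4 := by
    obtain ⟨a, ha | ha⟩ : ∃ a, n = 2 * a ∨ n = 2 * a + 1 := ⟨n / 2, by omega⟩
    · subst ha
      rw [show 2 * a / 2 = a by omega, show 2 * a - a = a by omega]
      nlinarith
    · subst ha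
      rw [show (2 * a + 1) / 2 = a by omega, show 2 * a + 1 - a = a + 1 by omega]
      nlinarith
  omega


lemma total_card (n : ℕ) : 2 ^ n.choose 2 ≤ Fintype.card (SimpleGraph (Fin n)) := by
  classical
  have hinj : Function.Injective
      (fun f : ({e : Sym2 (Fin n) // ¬ e.IsDiag} → Bool) =>
        SimpleGraph.fromEdgeSet {e | ∃ h : ¬ e.IsDiag, f ⟨e, h⟩ = true}) := by
    intro f g hfg
    funext e
    obtain ⟨e, he⟩ := e
    have h1 : ∀ f : ({e : Sym2 (Fin n) // ¬ e.IsDiag} → Bool),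
        e ∈ (SimpleGraph.fromEdgeSet {e | ∃ h : ¬ e.IsDiag, f ⟨e, h⟩ = true}).edgeSet
          ↔ f ⟨e, he⟩ = true := by
      intro f
      rw [edgeSet_fromEdgeSet]
      simp only [Set.mem_diff, Set.mem_setOf_eq]
      constructor
      · rintro ⟨⟨h', hf⟩, -⟩
        exact hf
      · intro hf
        exact ⟨⟨he, hf⟩, he⟩
    have hfg' : SimpleGraph.fromEdgeSet {e | ∃ h : ¬ e.IsDiag, f ⟨e, h⟩ = true}
        = SimpleGraph.fromEdgeSet {e | ∃ h : ¬ e.IsDiag, g ⟨e, h⟩ = true} := hfg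
    have h2 := (h1 f).symm.trans ((by rw [hfg'] : e ∈ (SimpleGraph.fromEdgeSet {e | ∃ h : ¬ e.IsDiag, f ⟨e, h⟩ = true}).edgeSet ↔ e ∈ (SimpleGraph.fromEdgeSet {e | ∃ h : ¬ e.IsDiag, g ⟨e, h⟩ = true}).edgeSet).trans (h1 g))
    exact Bool.eq_iff_iff.mpr (by simpa using h2)
  calc 2 ^ n.choose 2
      = Fintype.card ({e : Sym2 (Fin n) // ¬ e.IsDiag} → Bool) := by
        rw [Fintype.card_fun, Sym2.card_subtype_not_diag, Fintype.card_bool, Fintype.card_fin]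
    _ ≤ _ := Fintype.card_le_of_injective _ hinj


lemma symmDiffG_comm {V : Type*} (G G' : SimpleGraph V) : symmDiffG G G' = symmDiffG G' G := by
  ext a b
  constructor <;> intro h <;> rcases h with h | h
  · exact Or.inr h
  · exact Or.inl h
  · exact Or.inr h
  · exact Or.inl h

lemma symmDiffG_self_not {V : Type*} (G : SimpleGraph V) :
    ¬ ContainsOddCycle (symmDiffG G G) := by
  apply not_containsOddCycle_of_coloring (fun _ => true)
  intro a b hab
  rcases hab with ⟨h1, h2⟩ | ⟨h1, h2⟩ <;> exact absurd h1 h2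

lemma symmDiffG_cancel {V : Type*} (G X : SimpleGraph V) :
    symmDiffG G (symmDiffG G X) = X := by
  ext a b
  show (G.Adj a b ∧ ¬ ((G.Adj a b ∧ ¬ X.Adj a b) ∨ (X.Adj a b ∧ ¬ G.Adj a b))) ∨ _ ↔ _
  constructor
  · rintro (⟨h1, h2⟩ | ⟨h1, h2⟩)
    · by_contra hx
      exact h2 (Or.inl ⟨h1, hx⟩)
    · rcases h1 with ⟨hg, -⟩ | ⟨hx, -⟩
      · exact absurd hg h2
      · exact hx
  · intro hx
    by_cases hg : G.Adj a b
    · exact Or.inl ⟨hg, by rintro (⟨-, h⟩ | ⟨-, h⟩) <;> [exact h hx; exact h hg]⟩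
    · exact Or.inr ⟨Or.inr ⟨hx, hg⟩, hg⟩

open Classical in
lemma card_proper_le (n : ℕ) (c : Fin n → Bool) :
    Fintype.card {H : SimpleGraph (Fin n) // ∀ a b, H.Adj a b → c a ≠ c b}
      ≤ 2 ^ (n ^ 2 / 4) := by
  classical
  have key : ∀ (A B : {H : SimpleGraph (Fin n) // ∀ a b, H.Adj a b → c a ≠ c b}),
      ((fun p : {p : Fin n × Fin n // p.1 < p.2 ∧ c p.1 ≠ c p.2} => A.1.Adj p.1.1 p.1.2)
        = fun p => B.1.Adj p.1.1 p.1.2) → ∀ a b, A.1.Adj a b → B.1.Adj a b := by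
    intro A B hAB a b hab
    have hne := A.2 a b hab
    rcases lt_trichotomy a b with hlt | heq | hgt
    · have := congrFun hAB ⟨(a, b), hlt, hne⟩
      dsimp at this
      rw [← this]
      exact hab
    · exact absurd (heq ▸ hne) (by simp)
    · have := congrFun hAB ⟨(b, a), hgt, fun h2 => hne h2.symm⟩
      dsimp at this
      exact B.1.adj_symm (this ▸ A.1.adj_symm hab)
  have hinj : Function.Injective
      (fun H : {H : SimpleGraph (Fin n) // ∀ a b, H.Adj a b → c a ≠ c b} =>
        (fun p : {p : Fin n × Fin n // p.1 < p.2 ∧ c p.1 ≠ c p.2} => H.1.Adj p.1.1 p.1.2)) := by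
    intro H K h
    apply Subtype.ext
    ext a b
    exact ⟨key H K h a b, key K H h.symm a b⟩
  calc Fintype.card {H : SimpleGraph (Fin n) // ∀ a b, H.Adj a b → c a ≠ c b}
      ≤ Fintype.card ({p : Fin n × Fin n // p.1 < p.2 ∧ c p.1 ≠ c p.2} → Prop) :=
        Fintype.card_le_of_injective _ hinj
    _ = 2 ^ Fintype.card {p : Fin n × Fin n // p.1 < p.2 ∧ c p.1 ≠ c p.2} := by
        rw [Fintype.card_fun, Fintype.card_prop]
    _ ≤ 2 ^ (n ^ 2 / 4) := Nat.pow_le_pow_right (by norm_num) (card_cross_le c)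

lemma card_bip_le (n : ℕ)
    [DecidablePred (fun H : SimpleGraph (Fin n) => ¬ ContainsOddCycle H)] :
    (Finset.univ.filter (fun H : SimpleGraph (Fin n) => ¬ ContainsOddCycle H)).card
      ≤ 2 ^ (n + n ^ 2 / 4) := by
  classical
  have hsub : (Finset.univ.filter (fun H : SimpleGraph (Fin n) => ¬ ContainsOddCycle H))
      ⊆ Finset.univ.biUnion (fun c : Fin n → Bool =>
          Finset.univ.filter (fun H : SimpleGraph (Fin n) => ∀ a b, H.Adj a b → c a ≠ c b)) := by
    intro H hH
    rw [Finset.mem_filter] at hH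
    obtain ⟨c, hc⟩ := exists_coloring_of_not_containsOddCycle hH.2
    exact Finset.mem_biUnion.mpr ⟨c, Finset.mem_univ _,
      Finset.mem_filter.mpr ⟨Finset.mem_univ _, fun a b hab => hc hab⟩⟩
  calc (Finset.univ.filter (fun H : SimpleGraph (Fin n) => ¬ ContainsOddCycle H)).card
      ≤ (Finset.univ.biUnion (fun c : Fin n → Bool =>
          Finset.univ.filter (fun H : SimpleGraph (Fin n) => ∀ a b, H.Adj a b → c a ≠ c b))).card :=
        Finset.card_le_card hsub
    _ ≤ ∑ c : Fin n → Bool,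
          (Finset.univ.filter (fun H : SimpleGraph (Fin n) => ∀ a b, H.Adj a b → c a ≠ c b)).card :=
        Finset.card_biUnion_le
    _ ≤ ∑ _c : Fin n → Bool, 2 ^ (n ^ 2 / 4) := by
        apply Finset.sum_le_sum
        intro c _
        rw [← Fintype.card_subtype]
        exact card_proper_le n c
    _ = 2 ^ n * 2 ^ (n ^ 2 / 4) := by
        rw [Finset.sum_const, Finset.card_univ, Fintype.card_fun, Fintype.card_bool,
          Fintype.card_fin, smul_eq_mul]
    _ = 2 ^ (n + n ^ 2 / 4) := by rw [pow_add]

lemma family_card_le (n : ℕ) (𝓖 : Finset (SimpleGraph (Fin n)))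
    (hprop : ∀ G ∈ 𝓖, ∀ G' ∈ 𝓖, G ≠ G' → ContainsOddCycle (symmDiffG G G')) :
    𝓖.card ≤ 2 ^ (n ^ 2 / 4 + 1) := by
  classical
  set c : Fin n → Bool := fun a => decide ((a : ℕ) < n / 2) with hc
  have hinj : Function.Injective (fun H : {H : SimpleGraph (Fin n) // H ∈ 𝓖} =>
      (fun p : {p : Fin n × Fin n // p.1 < p.2 ∧ c p.1 = c p.2} => H.1.Adj p.1.1 p.1.2)) := by
    intro H K h
    apply Subtype.ext
    by_contra hne
    have hodd := hprop H.1 H.2 K.1 K.2 hne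
    apply not_containsOddCycle_of_coloring c ?_ hodd
    intro a b hab heq
    have hne2 : a ≠ b := (symmDiffG H.1 K.1).ne_of_adj hab
    have hAgree : ∀ x y : Fin n, x < y → c x = c y → (H.1.Adj x y ↔ K.1.Adj x y) := by
      intro x y hxy hcxy
      have := congrFun h ⟨(x, y), hxy, hcxy⟩
      dsimp at this
      rw [this]
    have : H.1.Adj a b ↔ K.1.Adj a b := by
      rcases lt_trichotomy a b with hlt | heqab | hgt
      · exact hAgree a b hlt heq
      · exact absurd heqab hne2
      · constructor
        · intro hx
          exact K.1.adj_symm ((hAgree b a hgt heq.symm).mp (H.1.adj_symm hx))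
        · intro hx
          exact H.1.adj_symm ((hAgree b a hgt heq.symm).mpr (K.1.adj_symm hx))
    rcases hab with ⟨h1, h2⟩ | ⟨h1, h2⟩
    · exact h2 (this.mp h1)
    · exact h2 (this.mpr h1)
  calc 𝓖.card = Fintype.card {H : SimpleGraph (Fin n) // H ∈ 𝓖} := (Fintype.card_coe _).symm
    _ ≤ Fintype.card ({p : Fin n × Fin n // p.1 < p.2 ∧ c p.1 = c p.2} → Prop) :=
        Fintype.card_le_of_injective _ hinj
    _ = 2 ^ Fintype.card {p : Fin n × Fin n // p.1 < p.2 ∧ c p.1 = c p.2} := by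
        rw [Fintype.card_fun, Fintype.card_prop]
    _ ≤ 2 ^ (n ^ 2 / 4 + 1) := Nat.pow_le_pow_right (by norm_num) (card_same_side_le n)



def famSet (n : ℕ) : Set ℕ :=
  {m : ℕ | ∃ 𝓖 : Finset (SimpleGraph (Fin n)),
    (∀ G ∈ 𝓖, ∀ G' ∈ 𝓖, G ≠ G' → ContainsOddCycle (symmDiffG G G')) ∧ 𝓖.card = m}

lemma famSet_bddAbove (n : ℕ) : BddAbove (famSet n) := by
  classical
  refine ⟨Fintype.card (SimpleGraph (Fin n)), ?_⟩
  rintro m ⟨𝓖, -, rfl⟩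
  exact Finset.card_le_univ 𝓖

lemma famSet_one_mem (n : ℕ) : 1 ∈ famSet n := by
  refine ⟨{⊥}, ?_, Finset.card_singleton _⟩
  intro G hG G' hG' hne
  rw [Finset.mem_singleton] at hG hG'
  exact absurd (hG.trans hG'.symm) hne

lemma one_le_M (n : ℕ) : 1 ≤ sSup (famSet n) :=
  le_csSup (famSet_bddAbove n) (famSet_one_mem n)

lemma M_le (n : ℕ) : sSup (famSet n) ≤ 2 ^ (n ^ 2 / 4 + 1) := by
  obtain ⟨𝓖, hprop, hcard⟩ :=
    Nat.sSup_mem ⟨1, famSet_one_mem n⟩ (famSet_bddAbove n)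
  rw [← hcard]
  exact family_card_le n 𝓖 hprop

lemma le_M (n : ℕ) : 2 ^ n.choose 2 ≤ sSup (famSet n) * 2 ^ (n + n ^ 2 / 4) := by
  classical
  obtain ⟨𝓖, hprop, hcard⟩ :=
    Nat.sSup_mem ⟨1, famSet_one_mem n⟩ (famSet_bddAbove n)
  have cover : ∀ X : SimpleGraph (Fin n), ∃ G ∈ 𝓖, ¬ ContainsOddCycle (symmDiffG G X) := by
    intro X
    by_contra hcov
    push_neg at hcov
    have hXnot : X ∉ 𝓖 := fun hX => (symmDiffG_self_not X) (hcov X hX)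
    have hmem : 𝓖.card + 1 ∈ famSet n := by
      refine ⟨insert X 𝓖, ?_, by rw [Finset.card_insert_of_notMem hXnot]⟩
      intro G hG G' hG' hne
      rcases Finset.mem_insert.mp hG with rfl | hG2 <;>
        rcases Finset.mem_insert.mp hG' with rfl | hG2'
      · exact absurd rfl hne
      · rw [symmDiffG_comm]
        exact hcov G' hG2'
      · exact hcov G hG2
      · exact hprop G hG2 G' hG2' hne
    have := le_csSup (famSet_bddAbove n) hmem
    omega
  have hcover2 : (Finset.univ : Finset (SimpleGraph (Fin n))) ⊆
      𝓖.biUnion (fun G => (Finset.univ.filter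
        (fun H : SimpleGraph (Fin n) => ¬ ContainsOddCycle H)).image (fun H => symmDiffG G H)) := by
    intro X _
    obtain ⟨G, hG, hB⟩ := cover X
    exact Finset.mem_biUnion.mpr ⟨G, hG, Finset.mem_image.mpr
      ⟨symmDiffG G X, Finset.mem_filter.mpr ⟨Finset.mem_univ _, hB⟩, symmDiffG_cancel G X⟩⟩
  calc 2 ^ n.choose 2 ≤ Fintype.card (SimpleGraph (Fin n)) := total_card n
    _ = (Finset.univ : Finset (SimpleGraph (Fin n))).card := Finset.card_univ.symm
    _ ≤ (𝓖.biUnion (fun G => (Finset.univ.filter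
        (fun H : SimpleGraph (Fin n) => ¬ ContainsOddCycle H)).image (fun H => symmDiffG G H))).card :=
        Finset.card_le_card hcover2
    _ ≤ ∑ G ∈ 𝓖, ((Finset.univ.filter
        (fun H : SimpleGraph (Fin n) => ¬ ContainsOddCycle H)).image (fun H => symmDiffG G H)).card :=
        Finset.card_biUnion_le
    _ ≤ ∑ _G ∈ 𝓖, 2 ^ (n + n ^ 2 / 4) := by
        apply Finset.sum_le_sum
        intro G _
        exact Finset.card_image_le.trans (card_bip_le n)
    _ = 𝓖.card * 2 ^ (n + n ^ 2 / 4) := by rw [Finset.sum_const, smul_eq_mul]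
    _ = sSup (famSet n) * 2 ^ (n + n ^ 2 / 4) := by rw [hcard]


end Aux

theorem stmt_12 :
    Tendsto
      (fun n : ℕ =>
        (2 : ℝ) / ((n : ℝ) * ((n : ℝ) - 1)) *
          Real.logb 2
            ((sSup {m : ℕ | ∃ 𝓖 : Finset (SimpleGraph (Fin n)),
                (∀ G ∈ 𝓖, ∀ G' ∈ 𝓖, G ≠ G' →
                  ContainsOddCycle (symmDiffG G G')) ∧ 𝓖.card = m} : ℕ) : ℝ))
      atTop (nhds (1 / 2)) := by
  show Tendsto
      (fun n : ℕ =>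
        (2 : ℝ) / ((n : ℝ) * ((n : ℝ) - 1)) *
          Real.logb 2 ((sSup (famSet n) : ℕ) : ℝ))
      atTop (nhds (1 / 2))
  have hnlim : Tendsto (fun n : ℕ => 1 / (n : ℝ)) atTop (nhds 0) :=
    tendsto_one_div_atTop_nhds_zero_nat
  have tl : Tendsto (fun n : ℕ => ((1 : ℝ) / 2 - 3 * (1 / n)) / (1 - 1 / n)) atTop
      (nhds (1 / 2)) := by
    have h1 := Tendsto.div ((tendsto_const_nhds (x := (1:ℝ)/2)).sub (hnlim.const_mul 3))
      ((tendsto_const_nhds (x := (1:ℝ))).sub hnlim) (by norm_num)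
    simpa [Pi.div_def] using h1
  have tu : Tendsto (fun n : ℕ => ((1 : ℝ) / 2 + 2 * (1 / n) * (1 / n)) / (1 - 1 / n)) atTop
      (nhds (1 / 2)) := by
    have h1 := Tendsto.div ((tendsto_const_nhds (x := (1:ℝ)/2)).add
        ((hnlim.const_mul 2).mul hnlim))
      ((tendsto_const_nhds (x := (1:ℝ))).sub hnlim) (by norm_num)
    simpa [Pi.div_def] using h1
  apply tendsto_of_tendsto_of_tendsto_of_le_of_le' tl tu
  · -- lower bound
    filter_upwards [eventually_ge_atTop 2] with n hn
    have hn2 : (2 : ℝ) ≤ (n : ℝ) := by exact_mod_cast hn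
    have hn0 : (n : ℝ) ≠ 0 := by linarith
    have hn1 : (n : ℝ) - 1 ≠ 0 := by linarith
    have hden : (0 : ℝ) < (n : ℝ) * ((n : ℝ) - 1) := by nlinarith
    have hM1 : (1 : ℝ) ≤ ((sSup (famSet n) : ℕ) : ℝ) := by exact_mod_cast one_le_M n
    have hMpos : (0 : ℝ) < ((sSup (famSet n) : ℕ) : ℝ) := by linarith
    have hlogM : ((n : ℝ) * ((n : ℝ) - 1) / 2 - ((n : ℝ) + (n : ℝ) ^ 2 / 4))
        ≤ Real.logb 2 ((sSup (famSet n) : ℕ) : ℝ) := by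
      have hle : ((2 : ℝ)) ^ (n.choose 2) ≤ ((sSup (famSet n) : ℕ) : ℝ)
          * (2 : ℝ) ^ (n + n ^ 2 / 4) := by exact_mod_cast le_M n
      have hstep : Real.logb 2 ((2 : ℝ) ^ (n.choose 2))
          ≤ Real.logb 2 (((sSup (famSet n) : ℕ) : ℝ) * (2 : ℝ) ^ (n + n ^ 2 / 4)) :=
        Real.logb_le_logb_of_le one_lt_two (by positivity) hle
      rw [Real.logb_pow, Real.logb_self_eq_one one_lt_two,
        Real.logb_mul (by linarith) (by positivity), Real.logb_pow,
        Real.logb_self_eq_one one_lt_two] at hstep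
      have hC : ((n.choose 2 : ℕ) : ℝ) = (n : ℝ) * ((n : ℝ) - 1) / 2 :=
        Nat.cast_choose_two (K := ℝ) n
      have hB2 : ((n ^ 2 / 4 : ℕ) : ℝ) ≤ (n : ℝ) ^ 2 / 4 := by
        have := Nat.cast_div_le (α := ℝ) (m := n ^ 2) (n := 4)
        push_cast at this ⊢
        linarith
      simp only [mul_one] at hstep
      push_cast at hstep
      rw [hC] at hstep
      linarith [hB2]
    have key : (2 : ℝ) / ((n : ℝ) * ((n : ℝ) - 1))
          * ((n : ℝ) * ((n : ℝ) - 1) / 2 - ((n : ℝ) + (n : ℝ) ^ 2 / 4))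
        ≤ (2 : ℝ) / ((n : ℝ) * ((n : ℝ) - 1))
          * Real.logb 2 ((sSup (famSet n) : ℕ) : ℝ) := by
      apply mul_le_mul_of_nonneg_left hlogM
      positivity
    refine le_trans (le_of_eq ?_) key
    field_simp
    ring
  · -- upper bound
    filter_upwards [eventually_ge_atTop 2] with n hn
    have hn2 : (2 : ℝ) ≤ (n : ℝ) := by exact_mod_cast hn
    have hn0 : (n : ℝ) ≠ 0 := by linarith
    have hn1 : (n : ℝ) - 1 ≠ 0 := by linarith
    have hden : (0 : ℝ) < (n : ℝ) * ((n : ℝ) - 1) := by nlinarith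
    have hM1 : (1 : ℝ) ≤ ((sSup (famSet n) : ℕ) : ℝ) := by exact_mod_cast one_le_M n
    have hlogM : Real.logb 2 ((sSup (famSet n) : ℕ) : ℝ) ≤ (n : ℝ) ^ 2 / 4 + 1 := by
      have hle : ((sSup (famSet n) : ℕ) : ℝ) ≤ (2 : ℝ) ^ (n ^ 2 / 4 + 1) := by
        exact_mod_cast M_le n
      have hstep : Real.logb 2 ((sSup (famSet n) : ℕ) : ℝ)
          ≤ Real.logb 2 ((2 : ℝ) ^ (n ^ 2 / 4 + 1)) :=
        Real.logb_le_logb_of_le one_lt_two (by linarith) hle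
      rw [Real.logb_pow, Real.logb_self_eq_one one_lt_two, mul_one] at hstep
      have hB : ((n ^ 2 / 4 + 1 : ℕ) : ℝ) ≤ (n : ℝ) ^ 2 / 4 + 1 := by
        push_cast
        have := Nat.cast_div_le (α := ℝ) (m := n ^ 2) (n := 4)
        push_cast at this
        linarith
      refine hstep.trans ?_
      push_cast at hB ⊢
      exact hB
    have key : (2 : ℝ) / ((n : ℝ) * ((n : ℝ) - 1))
          * Real.logb 2 ((sSup (famSet n) : ℕ) : ℝ)
        ≤ (2 : ℝ) / ((n : ℝ) * ((n : ℝ) - 1)) * ((n : ℝ) ^ 2 / 4 + 1) := by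
      apply mul_le_mul_of_nonneg_left hlogM
      positivity
    refine le_trans key (le_of_eq ?_)
    field_simp
    ring
end
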